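/- Let α > γ > 0, σ ≥ μ > 0 and fix λ > 0. Then the function β ↦ δ₂(β, λ) is strictly increasing on the interval (σ/γ, +∞), where δ₂(β, λ) = (1/(2λ))·(−μλ + βα b_β − σλ + βγ a_β + √((μλ − βα b_β + σλ − βγ a_β)² − 4(μσλ² − βα b_β σλ − βγ a_β μλ))). -/

import Mathlib

/-!
Write `A = βγ a_β`, `B = βα b_β`, `P = x + μλ`, `Q = x + σλ`. Then `x = λ δ₂(β, λ)` is the larger
root of `(P - B)(Q - A) = A B`, i.e. of `P Q = P A + Q B`, and both factors `P - B`, `Q - A` are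
positive there. Moving from `β₁` to `β₂ > β₁` changes `P A + Q B - P Q` at the old root by
`P ((A₂ + B₂) - (A₁ + B₁)) + (Q - P) (B₂ - B₁)`. This is positive because `A + B` and `B` both
increase with `β` and `Q - P = (σ - μ) λ ≥ 0`, so the larger root moves to the right.
-/

open Set

/-- The positive constant solution component `a_β`. -/
noncomputable def aβ (μ σ α γ β : ℝ) : ℝ := (β * α - μ) * σ / (β ^ 2 * α * γ - μ * σ)

/-- The positive constant solution component `b_β`. -/
noncomputable def bβ (μ σ α γ β : ℝ) : ℝ := (β * γ - σ) * μ / (β ^ 2 * α * γ - μ * σ)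

/-- The smaller eigenvalue `δ₁(β, λ)` of the matrix `D(β, λ)` (times λ). -/
noncomputable def delta₁ (μ σ α γ β lam : ℝ) : ℝ :=
  (1 / (2 * lam)) * (-(μ * lam) + β * α * bβ μ σ α γ β - σ * lam + β * γ * aβ μ σ α γ β -
    Real.sqrt ((μ * lam - β * α * bβ μ σ α γ β + σ * lam - β * γ * aβ μ σ α γ β) ^ 2 -
      4 * (μ * σ * lam ^ 2 - β * α * bβ μ σ α γ β * σ * lam -
        β * γ * aβ μ σ α γ β * μ * lam)))

/-- The larger eigenvalue `δ₂(β, λ)` of the matrix `D(β, λ)` (times λ). -/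
noncomputable def delta₂ (μ σ α γ β lam : ℝ) : ℝ :=
  (1 / (2 * lam)) * (-(μ * lam) + β * α * bβ μ σ α γ β - σ * lam + β * γ * aβ μ σ α γ β +
    Real.sqrt ((μ * lam - β * α * bβ μ σ α γ β + σ * lam - β * γ * aβ μ σ α γ β) ^ 2 -
      4 * (μ * σ * lam ^ 2 - β * α * bβ μ σ α γ β * σ * lam -
        β * γ * aβ μ σ α γ β * μ * lam)))

noncomputable def largerRoot (p q A B : ℝ) : ℝ :=
  (-p + B - q + A + √((p - B + q - A) ^ 2 - 4 * (p * q - B * q - A * p))) / 2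

lemma lam_mul_delta₂ (μ σ α γ β : ℝ) {lam : ℝ} (hlam : lam ≠ 0) :
    lam * delta₂ μ σ α γ β lam =
      largerRoot (μ * lam) (σ * lam) (β * γ * aβ μ σ α γ β) (β * α * bβ μ σ α γ β) := by
  unfold delta₂ largerRoot
  field_simp

lemma largerRoot_spec (p q : ℝ) {A B : ℝ} (hA : 0 < A) (hB : 0 < B) :
    0 < largerRoot p q A B + p - B ∧ 0 < largerRoot p q A B + q - A ∧
      (largerRoot p q A B + p - B) * (largerRoot p q A B + q - A) = A * B := by
  have hdisc : (p - B + q - A) ^ 2 - 4 * (p * q - B * q - A * p) =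
      ((p - B) - (q - A)) ^ 2 + 4 * (A * B) := by ring
  have hAB := mul_pos hA hB
  set R := √(((p - B) - (q - A)) ^ 2 + 4 * (A * B))
  have hR : R ^ 2 = ((p - B) - (q - A)) ^ 2 + 4 * (A * B) := Real.sq_sqrt (by positivity)
  have hR₀ : 0 ≤ R := Real.sqrt_nonneg _
  rw [largerRoot, hdisc]
  refine ⟨by nlinarith, by nlinarith, by linear_combination hR / 4⟩

lemma largerRoot_lt_largerRoot {p q A₁ B₁ A₂ B₂ : ℝ} (hpq : p ≤ q)
    (hA₁ : 0 < A₁) (hB₁ : 0 < B₁) (hA₂ : 0 < A₂) (hB₂ : 0 < B₂)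
    (hsum : A₁ + B₁ < A₂ + B₂) (hB : B₁ ≤ B₂) :
    largerRoot p q A₁ B₁ < largerRoot p q A₂ B₂ := by
  obtain ⟨hP₁, -, h₁⟩ := largerRoot_spec p q hA₁ hB₁
  obtain ⟨hP₂, hQ₂, h₂⟩ := largerRoot_spec p q hA₂ hB₂
  set x₁ := largerRoot p q A₁ B₁
  set x₂ := largerRoot p q A₂ B₂
  have hshort : (x₁ + p - B₂) * (x₁ + q - A₂) < A₂ * B₂ := by
    have hdiff : (x₁ + p - B₂) * (x₁ + q - A₂) - A₂ * B₂ =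
        -((x₁ + p) * ((A₂ + B₂) - (A₁ + B₁)) + (q - p) * (B₂ - B₁)) := by
      linear_combination h₁
    nlinarith [mul_pos (by linarith : 0 < x₁ + p) (sub_pos.2 hsum),
      mul_nonneg (sub_nonneg.2 hpq) (sub_nonneg.2 hB)]
  by_contra! h
  have := mul_le_mul (by linarith : x₂ + p - B₂ ≤ x₁ + p - B₂)
    (by linarith : x₂ + q - A₂ ≤ x₁ + q - A₂) hQ₂.le (by linarith)
  linarith

section Coefficients

variable {μ σ α γ : ℝ}

lemma aβ_denom_pos (hαγ : γ < α) (hγ : 0 < γ) (hμσ : μ ≤ σ) (hμ : 0 < μ) {β : ℝ}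
    (hβ : σ / γ < β) : 0 < β ^ 2 * α * γ - μ * σ := by
  have hγβ : σ < γ * β := (div_lt_iff₀' hγ).1 hβ
  have hαβ : γ * β < α * β := by nlinarith
  nlinarith [mul_lt_mul'' hγβ (hγβ.trans hαβ) (hμ.le.trans hμσ) (hμ.le.trans hμσ)]

lemma mul_aβ_pos (hαγ : γ < α) (hγ : 0 < γ) (hμσ : μ ≤ σ) (hμ : 0 < μ) {β : ℝ}
    (hβ : σ / γ < β) : 0 < β * γ * aβ μ σ α γ β := by
  have hγβ : σ < γ * β := (div_lt_iff₀' hγ).1 hβ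
  have hβ₀ : 0 < β := (div_pos (hμ.trans_le hμσ) hγ).trans hβ
  have hαβ : 0 < β * α - μ := by nlinarith
  have hσ : 0 < σ := hμ.trans_le hμσ
  have := aβ_denom_pos hαγ hγ hμσ hμ hβ
  unfold aβ
  positivity

lemma mul_bβ_pos (hαγ : γ < α) (hγ : 0 < γ) (hμσ : μ ≤ σ) (hμ : 0 < μ) {β : ℝ}
    (hβ : σ / γ < β) : 0 < β * α * bβ μ σ α γ β := by
  have hγβ : 0 < β * γ - σ := by linarith [(div_lt_iff₀ hγ).1 hβ]
  have hβ₀ : 0 < β := (div_pos (hμ.trans_le hμσ) hγ).trans hβ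
  have hα : 0 < α := hγ.trans hαγ
  have := aβ_denom_pos hαγ hγ hμσ hμ hβ
  unfold bβ
  positivity

lemma strictMonoOn_mul_bβ (hαγ : γ < α) (hγ : 0 < γ) (hμσ : μ ≤ σ) (hμ : 0 < μ) :
    StrictMonoOn (fun β => β * α * bβ μ σ α γ β) (Ioi (σ / γ)) := by
  intro β₁ hβ₁ β₂ hβ₂ h12
  have hD₁ := aβ_denom_pos hαγ hγ hμσ hμ hβ₁
  have hD₂ := aβ_denom_pos hαγ hγ hμσ hμ hβ₂
  have hγβ₁ : σ < γ * β₁ := (div_lt_iff₀' hγ).1 hβ₁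
  have hγβ₂ : σ < γ * β₂ := (div_lt_iff₀' hγ).1 hβ₂
  set m := α * γ * β₁ * β₂ - γ * μ * (β₁ + β₂) + μ * σ with hm_def
  have hm : 0 < m := by
    have hfac : m = (γ * β₁ - μ) * (α * β₂ - μ) + μ * β₂ * (α - γ) + μ * (σ - μ) := by ring
    have hβ₂₀ : 0 < β₂ := by nlinarith
    have : 0 < γ * β₁ - μ := by linarith
    have : 0 < α * β₂ - μ := by nlinarith
    have : 0 < α - γ := sub_pos.2 hαγ
    have : 0 ≤ σ - μ := sub_nonneg.2 hμσ
    rw [hfac]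
    positivity
  have hdiff : β₂ * α * bβ μ σ α γ β₂ - β₁ * α * bβ μ σ α γ β₁ =
      α * μ * σ * ((β₂ - β₁) * m) / ((β₁ ^ 2 * α * γ - μ * σ) * (β₂ ^ 2 * α * γ - μ * σ)) := by
    rw [hm_def, bβ, bβ, mul_div_assoc', mul_div_assoc', div_sub_div _ _ hD₂.ne' hD₁.ne',
      div_eq_div_iff (mul_ne_zero hD₂.ne' hD₁.ne') (mul_pos hD₁ hD₂).ne']
    ring
  have hσ : 0 < σ := hμ.trans_le hμσ
  have hα : 0 < α := hγ.trans hαγ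
  have : 0 < β₂ * α * bβ μ σ α γ β₂ - β₁ * α * bβ μ σ α γ β₁ := by
    rw [hdiff]
    exact div_pos (mul_pos (by positivity) (mul_pos (sub_pos.2 h12) hm)) (mul_pos hD₁ hD₂)
  simpa using this

lemma strictMonoOn_mul_aβ_add_mul_bβ (hαγ : γ < α) (hγ : 0 < γ) (hμσ : μ ≤ σ) (hμ : 0 < μ) :
    StrictMonoOn (fun β => β * γ * aβ μ σ α γ β + β * α * bβ μ σ α γ β) (Ioi (σ / γ)) := by
  intro β₁ hβ₁ β₂ hβ₂ h12
  have hD₁ := aβ_denom_pos hαγ hγ hμσ hμ hβ₁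
  have hD₂ := aβ_denom_pos hαγ hγ hμσ hμ hβ₂
  have hu₁ : 0 < γ * β₁ - σ := sub_pos.2 ((div_lt_iff₀' hγ).1 hβ₁)
  have hu₂ : 0 < γ * β₂ - σ := sub_pos.2 ((div_lt_iff₀' hγ).1 hβ₂)
  have hσ : 0 < σ := hμ.trans_le hμσ
  have hα : 0 < α := hγ.trans hαγ
  have hασγμ : 0 < α * σ - γ * μ := by nlinarith
  set m := γ * (α * γ * β₁ * β₂ - α * σ * (β₁ + β₂) + μ * σ) +
    α * (α * γ * β₁ * β₂ - γ * μ * (β₁ + β₂) + μ * σ) with hm_def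
  have hm : 0 < m := by
    have hfac : γ ^ 2 * m = γ * σ * (α - γ) * (α * σ - γ * μ) +
        α * γ * (α * σ - γ * μ) * ((γ * β₁ - σ) + (γ * β₂ - σ)) +
        α * γ * (α + γ) * ((γ * β₁ - σ) * (γ * β₂ - σ)) := by ring
    have : 0 < γ ^ 2 * m := by
      rw [hfac]
      have := sub_pos.2 hαγ
      positivity
    exact pos_of_mul_pos_right this (by positivity)
  have hcommon : ∀ β, β * γ * aβ μ σ α γ β + β * α * bβ μ σ α γ β =
      β * (γ * ((β * α - μ) * σ) + α * ((β * γ - σ) * μ)) / (β ^ 2 * α * γ - μ * σ) := by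
    intro β
    unfold aβ bβ
    ring
  have hdiff : (β₂ * γ * aβ μ σ α γ β₂ + β₂ * α * bβ μ σ α γ β₂) -
      (β₁ * γ * aβ μ σ α γ β₁ + β₁ * α * bβ μ σ α γ β₁) =
      μ * σ * ((β₂ - β₁) * m) / ((β₁ ^ 2 * α * γ - μ * σ) * (β₂ ^ 2 * α * γ - μ * σ)) := by
    rw [hm_def, hcommon, hcommon, div_sub_div _ _ hD₂.ne' hD₁.ne',
      div_eq_div_iff (mul_ne_zero hD₂.ne' hD₁.ne') (mul_pos hD₁ hD₂).ne']
    ring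
  have : 0 < (β₂ * γ * aβ μ σ α γ β₂ + β₂ * α * bβ μ σ α γ β₂) -
      (β₁ * γ * aβ μ σ α γ β₁ + β₁ * α * bβ μ σ α γ β₁) := by
    rw [hdiff]
    exact div_pos (mul_pos (by positivity) (mul_pos (sub_pos.2 h12) hm)) (mul_pos hD₁ hD₂)
  simpa using this

end Coefficients

/-- For α > γ > 0, σ ≥ μ > 0 and fixed λ > 0, the map β ↦ δ₂(β, λ)
is strictly increasing on (σ/γ, ∞). -/
theorem delta2_strictMonoOn_beta
    (μ σ α γ lam : ℝ) (hαγ : γ < α) (hγ : 0 < γ) (hμσ : μ ≤ σ) (hμ : 0 < μ)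
    (hlam : 0 < lam) :
    StrictMonoOn (fun β : ℝ => delta₂ μ σ α γ β lam) (Set.Ioi (σ / γ)) := by
  intro β₁ hβ₁ β₂ hβ₂ h12
  have key := largerRoot_lt_largerRoot (mul_le_mul_of_nonneg_right hμσ hlam.le)
    (mul_aβ_pos hαγ hγ hμσ hμ hβ₁) (mul_bβ_pos hαγ hγ hμσ hμ hβ₁)
    (mul_aβ_pos hαγ hγ hμσ hμ hβ₂) (mul_bβ_pos hαγ hγ hμσ hμ hβ₂)
    (strictMonoOn_mul_aβ_add_mul_bβ hαγ hγ hμσ hμ hβ₁ hβ₂ h12)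
    (strictMonoOn_mul_bβ hαγ hγ hμσ hμ hβ₁ hβ₂ h12).le
  rw [← lam_mul_delta₂ _ _ _ _ _ hlam.ne', ← lam_mul_delta₂ _ _ _ _ _ hlam.ne'] at key
  exact lt_of_mul_lt_mul_left key hlam.le
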